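/- arXiv:2101.06718 — 4 statements merged into one kernel-verified Lean document; each statement's English description precedes it below -/
import Mathlib

section
/- Let P be symmetric positive definite and M ∈ ℝ^{n×n}. Then MP + PMᵀ ≺ 0 if and only if there exists X ∈ ℝ^{n×n} such that the 2n×2n symmetric matrix [[0, P],[P, 0]] + He([[MX, MX],[-X, -X]]) is negative definite, where He(N) = N + Nᵀ. -/
/-!
Write `N X` for the dilated matrix. For every `X`, `[I, M] N X [I; Mᵀ] = MP + PMᵀ`, and `[I; Mᵀ]`
is injective, so `N X ≺ 0` forces `MP + PMᵀ ≺ 0`. Conversely, if `MP + PMᵀ ≺ 0` then `1` is not an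
eigenvalue of `M`: a fixed vector `y` of `Mᵀ` would give `yᵀ(MP + PMᵀ)y = 2 yᵀPy > 0`. So
`X = (I - M)⁻¹P` is defined, and the invertible `S = [[I, I], [I, Mᵀ]]` satisfies
`Sᵀ (N X) S = diag(-2P, MP + PMᵀ) ≺ 0`.
-/

open Matrix

/-- `He N = N + Nᵀ`. -/
def He {n : ℕ} (N : Matrix (Fin n ⊕ Fin n) (Fin n ⊕ Fin n) ℝ) :
    Matrix (Fin n ⊕ Fin n) (Fin n ⊕ Fin n) ℝ := N + Nᵀ

namespace Matrix

theorem PosDef.fromBlocks_zero_zero {m n R : Type*} [Fintype m] [Fintype n] [Ring R]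
    [PartialOrder R] [StarRing R] [IsOrderedAddMonoid R] {A : Matrix m m R} {D : Matrix n n R}
    (hA : A.PosDef) (hD : D.PosDef) : (fromBlocks A 0 0 D).PosDef := by
  refine .of_dotProduct_mulVec_pos (hA.isHermitian.fromBlocks (by simp) hD.isHermitian)
    fun z hz => ?_
  obtain ⟨a, b, rfl⟩ : ∃ a b, z = Sum.elim a b := ⟨_, _, (Sum.elim_comp_inl_inr z).symm⟩
  simp only [fromBlocks_mulVec, Function.star_sumElim, sumElim_dotProduct_sumElim, zero_mulVec,
    add_zero, zero_add]
  obtain rfl | ha := eq_or_ne a 0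
  · have hb : b ≠ 0 := by rintro rfl; exact hz Sum.elim_zero_zero
    simpa using hD.dotProduct_mulVec_pos hb
  · exact add_pos_of_pos_of_nonneg (hA.dotProduct_mulVec_pos ha)
      (hD.posSemidef.dotProduct_mulVec_nonneg b)

end Matrix

section Lyapunov

variable {ι : Type*} [Fintype ι] {M P : Matrix ι ι ℝ}

theorem dotProduct_lyapunov_mulVec_of_fixed {y : ι → ℝ} (hy : Mᵀ *ᵥ y = y) :
    y ⬝ᵥ (M * P + P * Mᵀ) *ᵥ y = 2 * (y ⬝ᵥ P *ᵥ y) := by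
  rw [add_mulVec, dotProduct_add, ← mulVec_mulVec, ← mulVec_mulVec, hy, dotProduct_mulVec,
    ← mulVec_transpose, hy, two_mul]

theorem isUnit_one_sub_of_lyapunov [DecidableEq ι] (hP : P.PosDef)
    (hQ : (-(M * P + P * Mᵀ)).PosDef) : IsUnit (1 - M) := by
  rw [← isUnit_transpose, isUnit_iff_isUnit_det, isUnit_iff_ne_zero, Ne,
    ← exists_mulVec_eq_zero_iff]
  rintro ⟨y, hy0, hy⟩
  have hMy : Mᵀ *ᵥ y = y := by
    rw [transpose_sub, transpose_one, sub_mulVec, one_mulVec, sub_eq_zero] at hy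
    exact hy.symm
  have hQy := hQ.dotProduct_mulVec_pos hy0
  have hPy := hP.dotProduct_mulVec_pos hy0
  rw [star_trivial, neg_mulVec, dotProduct_neg, dotProduct_lyapunov_mulVec_of_fixed hMy] at hQy
  rw [star_trivial] at hPy
  linarith

end Lyapunov

def dilatedLyapunov {n : ℕ} (M P X : Matrix (Fin n) (Fin n) ℝ) :
    Matrix (Fin n ⊕ Fin n) (Fin n ⊕ Fin n) ℝ :=
  fromBlocks 0 P P 0 + He (fromBlocks (M * X) (M * X) (-X) (-X))

section DilatedLyapunov

variable {n : ℕ} (M P X : Matrix (Fin n) (Fin n) ℝ)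

theorem dilatedLyapunov_eq_fromBlocks : dilatedLyapunov M P X =
    fromBlocks (M * X + Xᵀ * Mᵀ) (P + M * X - Xᵀ) (P + Xᵀ * Mᵀ - X) (-X - Xᵀ) := by
  simp only [dilatedLyapunov, He, fromBlocks_transpose, fromBlocks_add, transpose_mul,
    transpose_neg]
  congr 1 <;> abel

theorem fromCols_mul_dilatedLyapunov_mul_fromRows :
    fromCols (1 : Matrix (Fin n) (Fin n) ℝ) M * dilatedLyapunov M P X *
      fromRows (1 : Matrix (Fin n) (Fin n) ℝ) Mᵀ = M * P + P * Mᵀ := by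
  rw [dilatedLyapunov_eq_fromBlocks, fromCols_mul_fromBlocks, fromCols_mul_fromRows]
  noncomm_ring

theorem transpose_mul_dilatedLyapunov_mul_fromBlocks (hP : P.IsSymm) (hX : (1 - M) * X = P) :
    (fromBlocks 1 1 1 Mᵀ)ᵀ * dilatedLyapunov M P X * fromBlocks 1 1 1 Mᵀ =
      fromBlocks (-(2 • P)) 0 0 (M * P + P * Mᵀ) := by
  have hXt : Xᵀ * (1 - Mᵀ) = P := by
    rw [← hP.eq, ← hX, transpose_mul, transpose_sub, transpose_one]
  rw [dilatedLyapunov_eq_fromBlocks, fromBlocks_transpose, fromBlocks_multiply,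
    fromBlocks_multiply]
  simp only [transpose_one, transpose_transpose, one_mul, mul_one]
  congr 1
  · linear_combination (norm := noncomm_ring) -2 * hX - 2 * hXt
  · linear_combination (norm := noncomm_ring) -(hX * (1 + Mᵀ))
  · linear_combination (norm := noncomm_ring) -((1 + M) * hXt)
  · noncomm_ring

variable {M P X}

theorem posDef_neg_lyapunov_of_posDef_neg_dilatedLyapunov
    (h : (-dilatedLyapunov M P X).PosDef) : (-(M * P + P * Mᵀ)).PosDef := by
  have hB : Function.Injective (fromRows (1 : Matrix (Fin n) (Fin n) ℝ) Mᵀ).mulVec :=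
    fun x y hxy => by simpa [fromRows_mulVec] using congr_arg (· ∘ Sum.inl) hxy
  have := h.conjTranspose_mul_mul_same hB
  rwa [conjTranspose_fromRows_eq_fromCols_conjTranspose, conjTranspose_one,
    conjTranspose_eq_transpose_of_trivial, transpose_transpose, Matrix.mul_neg, Matrix.neg_mul,
    fromCols_mul_dilatedLyapunov_mul_fromRows] at this

theorem exists_posDef_neg_dilatedLyapunov (hP : P.PosDef) (hQ : (-(M * P + P * Mᵀ)).PosDef) :
    ∃ X, (-dilatedLyapunov M P X).PosDef := by
  have hD := isUnit_one_sub_of_lyapunov hP hQ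
  have hS : IsUnit (fromBlocks (1 : Matrix (Fin n) (Fin n) ℝ) 1 1 Mᵀ) := by
    rw [isUnit_iff_isUnit_det, det_fromBlocks_one₁₁, mul_one, ← isUnit_iff_isUnit_det,
      show Mᵀ - 1 = -(1 - M)ᵀ by simp, IsUnit.neg_iff, isUnit_transpose]
    exact hD
  refine ⟨(1 - M)⁻¹ * P, ?_⟩
  rw [← hS.posDef_star_left_conjugate_iff, star_eq_conjTranspose,
    conjTranspose_eq_transpose_of_trivial, mul_neg, neg_mul,
    transpose_mul_dilatedLyapunov_mul_fromBlocks _ _ _ (isHermitian_iff_isSymm.mp hP.isHermitian)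
      (mul_nonsing_inv_cancel_left _ _ ((isUnit_iff_isUnit_det _).mp hD)),
    fromBlocks_neg, neg_neg, neg_zero]
  exact (hP.smul two_pos).fromBlocks_zero_zero hQ

end DilatedLyapunov

theorem stmt4 {n : ℕ} (M P : Matrix (Fin n) (Fin n) ℝ) (hP : P.PosDef) :
    (-(M * P + P * Mᵀ)).PosDef ↔
      ∃ X : Matrix (Fin n) (Fin n) ℝ,
        (-(Matrix.fromBlocks 0 P P 0 +
            He (Matrix.fromBlocks (M * X) (M * X) (-X) (-X)))).PosDef :=
  ⟨exists_posDef_neg_dilatedLyapunov hP,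
    fun ⟨_, hX⟩ => posDef_neg_lyapunov_of_posDef_neg_dilatedLyapunov hX⟩
end

section
/- (Forward direction of the dilated LMI) If P is symmetric positive definite, M ∈ ℝ^{n×n}, X ∈ ℝ^{n×n}, and the 2n×2n symmetric matrix [[He(MX), P + MX - Xᵀ],[P + XᵀMᵀ - X, -X - Xᵀ]] is negative definite, then MP + PMᵀ ≺ 0. -/
open Matrix

/-- `[[He(MX), P + MX - Xᵀ], [P + XᵀMᵀ - X, -X - Xᵀ]]`. -/
def dilatedLMI {n : ℕ} (M P X : Matrix (Fin n) (Fin n) ℝ) :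
    Matrix (Fin n ⊕ Fin n) (Fin n ⊕ Fin n) ℝ :=
  fromBlocks 0 P P 0 + He (fromBlocks (M * X) (M * X) (-X) (-X))

theorem Matrix.fromRows_one_mulVec_injective {m n R : Type*} [Fintype m] [DecidableEq m]
    [Semiring R] (B : Matrix n m R) :
    Function.Injective (fromRows (1 : Matrix m m R) B).mulVec := fun v w h => by
  simpa [fromRows_mulVec] using congrArg (· ∘ Sum.inl) h

theorem fromCols_one_mul_dilatedLMI_mul_fromRows_one {n : ℕ}
    (M P X : Matrix (Fin n) (Fin n) ℝ) :
    fromCols (1 : Matrix (Fin n) (Fin n) ℝ) M * dilatedLMI M P X *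
        fromRows (1 : Matrix (Fin n) (Fin n) ℝ) Mᵀ =
      M * P + P * Mᵀ := by
  rw [dilatedLMI, He, fromBlocks_transpose, fromBlocks_add, fromBlocks_add,
    fromCols_mul_fromBlocks, fromCols_mul_fromRows]
  simp only [transpose_mul, transpose_neg]
  noncomm_ring

theorem stmt5_general {n : ℕ} (M P X : Matrix (Fin n) (Fin n) ℝ)
    (hLMI : (-(Matrix.fromBlocks 0 P P 0 +
        He (Matrix.fromBlocks (M * X) (M * X) (-X) (-X)))).PosDef) :
    (-(M * P + P * Mᵀ)).PosDef := by
  have hcongr := (show (-dilatedLMI M P X).PosDef from hLMI).conjTranspose_mul_mul_same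
    (fromRows_one_mulVec_injective Mᵀ)
  rwa [conjTranspose_fromRows_eq_fromCols_conjTranspose, conjTranspose_one,
    conjTranspose_eq_transpose_of_trivial, transpose_transpose, Matrix.mul_neg, Matrix.neg_mul,
    fromCols_one_mul_dilatedLMI_mul_fromRows_one] at hcongr

theorem stmt5 {n : ℕ} (M P X : Matrix (Fin n) (Fin n) ℝ) (hP : P.PosDef)
    (hLMI : (-(Matrix.fromBlocks 0 P P 0 +
        He (Matrix.fromBlocks (M * X) (M * X) (-X) (-X)))).PosDef) :
    (-(M * P + P * Mᵀ)).PosDef :=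
  stmt5_general M P X hLMI
end

section
/- (Main theorem) Let S = span{S₁,…,S_k} ⊆ ℝ^{m×n}, L = [S₁|⋯|S_k], and Υ = {Q : ∃ invertible Λ ∈ ℝ^{k×k}, L(I_k ⊗ Q) = L(Λ ⊗ I_n)}. Suppose there exist a symmetric positive definite P, R ∈ S, and a nonsingular X ∈ Υ such that [[0,P],[P,0]] + He([[AX+BR, AX+BR],[-X,-X]]) ≺ 0. Then K = RX⁻¹ satisfies K ∈ S and A + BK is Hurwitz. -/
open Matrix Kronecker

/-!
Congruence of the dilated LMI with `[I; (A + BK)ᵀ]` eliminates the slack variable `X` and leaves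
the Lyapunov inequality `(A + BK) P + P (A + BK)ᵀ ≺ 0`; testing it against a left eigenvector `w`
of `A + BK` for an eigenvalue `z` gives `2 Re z · w*Pw < 0`, so `A + BK` is Hurwitz. For the structure of `K`, the
identity `L (I ⊗ X) = L (Λ ⊗ I)` says exactly that `S_p X = ∑_j Λ_jp S_j`, so the span `S` is
invariant under right multiplication by `X`; being injective on the finite-dimensional space `S`,
this map is onto `S`, hence `S` is also invariant under `X⁻¹` and `R X⁻¹ ∈ S`.
-/

/-- A real square matrix is Hurwitz if every complex eigenvalue has negative real part. -/
def Hurwitz {n : ℕ} (M : Matrix (Fin n) (Fin n) ℝ) : Prop :=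
  ∀ z ∈ spectrum ℂ (M.map (Complex.ofReal)), z.re < 0

namespace Matrix

section Spectrum

variable {ι : Type*} [Fintype ι]

lemma re_star_dotProduct_map_ofReal_mulVec (M : Matrix ι ι ℝ) (x : ι → ℂ) :
    (star x ⬝ᵥ (M.map Complex.ofReal *ᵥ x)).re =
      (fun i => (x i).re) ⬝ᵥ (M *ᵥ fun i => (x i).re) +
        (fun i => (x i).im) ⬝ᵥ (M *ᵥ fun i => (x i).im) := by
  simp only [dotProduct, mulVec, Complex.re_sum, Finset.mul_sum, ← Finset.sum_add_distrib]
  refine Finset.sum_congr rfl fun i _ => Finset.sum_congr rfl fun j _ => ?_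
  simp only [Pi.star_apply, map_apply, Complex.mul_re, Complex.star_def, Complex.conj_re,
    Complex.conj_im, Complex.ofReal_re, Complex.ofReal_im, Complex.mul_im]
  ring

lemma PosDef.re_star_dotProduct_map_ofReal_pos {M : Matrix ι ι ℝ} (hM : M.PosDef) {x : ι → ℂ}
    (hx : x ≠ 0) : 0 < (star x ⬝ᵥ (M.map Complex.ofReal *ᵥ x)).re := by
  rw [re_star_dotProduct_map_ofReal_mulVec]
  have hre := hM.posSemidef.dotProduct_mulVec_nonneg fun i => (x i).re
  have him := hM.posSemidef.dotProduct_mulVec_nonneg fun i => (x i).im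
  simp only [star_trivial] at hre him
  by_cases h : (fun i => (x i).re) = 0
  · have h' : (fun i => (x i).im) ≠ 0 := fun h' =>
      hx (funext fun i => Complex.ext (congrFun h i) (congrFun h' i))
    have := hM.dotProduct_mulVec_pos h'
    simp only [star_trivial] at this
    linarith
  · have := hM.dotProduct_mulVec_pos h
    simp only [star_trivial] at this
    linarith

lemma exists_vecMul_eq_smul_of_mem_spectrum [DecidableEq ι] {K : Type*} [Field K]
    {A : Matrix ι ι K} {z : K} (hz : z ∈ spectrum K A) : ∃ w ≠ 0, w ᵥ* A = z • w := by
  rw [spectrum.mem_iff, isUnit_iff_isUnit_det, isUnit_iff_ne_zero, not_not,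
    ← exists_vecMul_eq_zero_iff, Algebra.algebraMap_eq_smul_one] at hz
  obtain ⟨w, hw, hwA⟩ := hz
  refine ⟨w, hw, ?_⟩
  rw [vecMul_sub, vecMul_smul, vecMul_one, sub_eq_zero] at hwA
  exact hwA.symm

end Spectrum

def hconcat {ι m n K : Type*} (S : ι → Matrix m n K) : Matrix m (ι × n) K :=
  of fun i p => S p.1 i p.2

section Span

variable {ι m n K : Type*} [Fintype ι] [DecidableEq ι] [Fintype n] [DecidableEq n]

lemma mul_eq_sum_smul_of_hconcat_mul_kronecker_eq [CommSemiring K] {S : ι → Matrix m n K}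
    {X : Matrix n n K} {Λ : Matrix ι ι K}
    (h : hconcat S * ((1 : Matrix ι ι K) ⊗ₖ X) = hconcat S * (Λ ⊗ₖ (1 : Matrix n n K)))
    (p : ι) : S p * X = ∑ j, Λ j p • S j := by
  ext i c
  have hic := congrFun (congrFun h i) (p, c)
  simp only [hconcat, mul_apply, of_apply, kroneckerMap_apply, one_apply, ite_mul, one_mul,
    zero_mul, mul_ite, mul_zero, Fintype.sum_prod_type, Finset.sum_ite_irrel,
    Finset.sum_const_zero, Finset.sum_ite_eq', Finset.mem_univ, ↓reduceIte, mul_one] at hic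
  simp only [mul_apply, sum_apply, smul_apply, smul_eq_mul, hic, mul_comm]

lemma mul_mem_span_of_hconcat_mul_kronecker_eq [CommRing K] {S : ι → Matrix m n K}
    {X : Matrix n n K} {Λ : Matrix ι ι K}
    (h : hconcat S * ((1 : Matrix ι ι K) ⊗ₖ X) = hconcat S * (Λ ⊗ₖ (1 : Matrix n n K)))
    {R : Matrix m n K} (hR : R ∈ Submodule.span K (Set.range S)) :
    R * X ∈ Submodule.span K (Set.range S) := by
  refine Submodule.span_le (p := (Submodule.span K (Set.range S)).comap
    (mulRightLinearMap m K X)) |>.mpr ?_ hR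
  rintro _ ⟨p, rfl⟩
  rw [SetLike.mem_coe, Submodule.mem_comap, mulRightLinearMap_apply,
    mul_eq_sum_smul_of_hconcat_mul_kronecker_eq h p]
  exact Submodule.sum_mem _ fun j _ => Submodule.smul_mem _ _ (Submodule.subset_span ⟨j, rfl⟩)

end Span

lemma mul_inv_mem_of_forall_mul_mem {m n K : Type*} [Fintype m] [Fintype n] [DecidableEq n]
    [Field K] {V : Submodule K (Matrix m n K)} {X : Matrix n n K} (hV : ∀ R ∈ V, R * X ∈ V)
    (hX : IsUnit X.det) {R : Matrix m n K} (hR : R ∈ V) : R * X⁻¹ ∈ V := by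
  have hinj : Set.InjOn (mulRightLinearMap m K X) V := fun A _ B _ hAB => by
    simpa [mul_nonsing_inv_cancel_right _ _ hX] using congrArg (· * X⁻¹) hAB
  obtain ⟨A, hA, hAX⟩ := (LinearMap.injOn_iff_surjOn hV).mp hinj hR
  rwa [← hAX, mulRightLinearMap_apply, mul_nonsing_inv_cancel_right _ _ hX]

end Matrix

theorem hurwitz_of_posDef_of_posDef_neg_lyapunov {n : ℕ} {M P : Matrix (Fin n) (Fin n) ℝ}
    (hP : P.PosDef) (hQ : (-(M * P + P * Mᵀ)).PosDef) : Hurwitz M := by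
  intro z hz
  set Mc := M.map Complex.ofReal
  set Pc := P.map Complex.ofReal
  obtain ⟨w, hw0, hw⟩ := exists_vecMul_eq_smul_of_mem_spectrum hz
  have hMw : Mcᵀ *ᵥ star w = star z • star w := by
    have hMc : Mcᴴ = Mcᵀ := by ext i j; simp [Mc]
    rw [← hMc, ← star_vecMul, hw, star_smul]
  have hQc : (-(M * P + P * Mᵀ)).map Complex.ofReal = -(Mc * Pc + Pc * Mcᵀ) := by
    ext i j; simp [Mc, Pc, mul_apply]
  have hquad : star (star w) ⬝ᵥ ((-(M * P + P * Mᵀ)).map Complex.ofReal *ᵥ star w) =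
      -((z + star z) * (star (star w) ⬝ᵥ (Pc *ᵥ star w))) := by
    simp only [hQc, star_star, neg_mulVec, add_mulVec, ← mulVec_mulVec, dotProduct_neg,
      dotProduct_add, dotProduct_mulVec w Mc, hw, hMw, mulVec_smul, dotProduct_smul,
      smul_dotProduct, smul_eq_mul]
    ring
  have hQw := hQ.re_star_dotProduct_map_ofReal_pos (star_ne_zero.mpr hw0)
  have hPw := hP.re_star_dotProduct_map_ofReal_pos (star_ne_zero.mpr hw0)
  rw [hquad, Complex.star_def, Complex.add_conj, Complex.neg_re, Complex.re_ofReal_mul] at hQw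
  nlinarith

theorem posDef_neg_lyapunov_of_dilated_lmi {n : ℕ} {M P X : Matrix (Fin n) (Fin n) ℝ}
    (hLMI : (-(fromBlocks 0 P P 0 + He (fromBlocks (M * X) (M * X) (-X) (-X)))).PosDef) :
    (-(M * P + P * Mᵀ)).PosDef := by
  have hinj : Function.Injective (fromRows 1 Mᵀ).mulVec := fun x y hxy => by
    funext i; simpa [fromRows_mulVec] using congrFun hxy (Sum.inl i)
  convert hLMI.conjTranspose_mul_mul_same hinj using 1
  simp only [conjTranspose_eq_transpose_of_trivial, transpose_fromRows, transpose_one,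
    transpose_transpose, He, fromBlocks_transpose, fromBlocks_add, fromBlocks_neg,
    fromCols_mul_fromBlocks, fromCols_mul_fromRows, transpose_neg, transpose_mul]
  noncomm_ring

theorem stmt10_general {m n k : ℕ} (A : Matrix (Fin n) (Fin n) ℝ) (B : Matrix (Fin n) (Fin m) ℝ)
    (S : Fin k → Matrix (Fin m) (Fin n) ℝ)
    (L : Matrix (Fin m) (Fin k × Fin n) ℝ)
    (hL : L = Matrix.of fun i p => S p.1 i p.2)
    (Υ : Set (Matrix (Fin n) (Fin n) ℝ))
    (hΥ : Υ = {Q | ∃ Λ : Matrix (Fin k) (Fin k) ℝ, IsUnit Λ.det ∧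
        L * ((1 : Matrix (Fin k) (Fin k) ℝ) ⊗ₖ Q) =
        L * (Λ ⊗ₖ (1 : Matrix (Fin n) (Fin n) ℝ))})
    (P X : Matrix (Fin n) (Fin n) ℝ) (R : Matrix (Fin m) (Fin n) ℝ)
    (hP : P.PosDef) (hR : R ∈ Submodule.span ℝ (Set.range S))
    (hX : X ∈ Υ) (hXinv : IsUnit X.det)
    (hLMI : (-(Matrix.fromBlocks 0 P P 0 +
        He (Matrix.fromBlocks (A * X + B * R) (A * X + B * R) (-X) (-X)))).PosDef) :
    R * X⁻¹ ∈ Submodule.span ℝ (Set.range S) ∧ Hurwitz (A + B * (R * X⁻¹)) := by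
  subst hL hΥ
  obtain ⟨Λ, -, hΛ⟩ := hX
  refine ⟨mul_inv_mem_of_forall_mul_mem
    (fun _ hR' => mul_mem_span_of_hconcat_mul_kronecker_eq hΛ hR') hXinv hR, ?_⟩
  have hclosed : (A + B * (R * X⁻¹)) * X = A * X + B * R := by
    rw [Matrix.add_mul, Matrix.mul_assoc, nonsing_inv_mul_cancel_right _ _ hXinv]
  rw [← hclosed] at hLMI
  exact hurwitz_of_posDef_of_posDef_neg_lyapunov hP (posDef_neg_lyapunov_of_dilated_lmi hLMI)

theorem stmt10 {m n k : ℕ} (A : Matrix (Fin n) (Fin n) ℝ) (B : Matrix (Fin n) (Fin m) ℝ)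
    (S : Fin k → Matrix (Fin m) (Fin n) ℝ) (hbasis : LinearIndependent ℝ S)
    (L : Matrix (Fin m) (Fin k × Fin n) ℝ)
    (hL : L = Matrix.of fun i p => S p.1 i p.2)
    (Υ : Set (Matrix (Fin n) (Fin n) ℝ))
    (hΥ : Υ = {Q | ∃ Λ : Matrix (Fin k) (Fin k) ℝ, IsUnit Λ.det ∧
        L * ((1 : Matrix (Fin k) (Fin k) ℝ) ⊗ₖ Q) =
        L * (Λ ⊗ₖ (1 : Matrix (Fin n) (Fin n) ℝ))})
    (P X : Matrix (Fin n) (Fin n) ℝ) (R : Matrix (Fin m) (Fin n) ℝ)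
    (hP : P.PosDef) (hR : R ∈ Submodule.span ℝ (Set.range S))
    (hX : X ∈ Υ) (hXinv : IsUnit X.det)
    (hLMI : (-(Matrix.fromBlocks 0 P P 0 +
        He (Matrix.fromBlocks (A * X + B * R) (A * X + B * R) (-X) (-X)))).PosDef) :
    R * X⁻¹ ∈ Submodule.span ℝ (Set.range S) ∧ Hurwitz (A + B * (R * X⁻¹)) :=
  stmt10_general A B S L hL Υ hΥ P X R hP hR hX hXinv hLMI
end

section
/- Let A = diag(0, 0.1, 0) ∈ ℝ^{3×3} and B ∈ ℝ^{3×2} with rows (1,0), (0,1), (1,1). For every diagonal matrix W = diag(w₁,w₂,w₃) with w₁,w₂,w₃ > 0 and every γ ∈ ℝ, the matrix Γ = AW + WAᵀ - 2γBBᵀ is not negative definite. -/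
/-!
The vector `x = (1, 1, -1)` lies in the kernel of `Bᵀ`, so the `γ`-term drops out of `xᵀ Γ x`,
which leaves `xᵀ (A W + W Aᵀ) x = w₂ / 5 ≥ 0`; hence `-Γ` is not positive definite.
-/

open Matrix

theorem not_posDef_neg_sub_smul_mul_transpose {m n : Type*} [Fintype m] [Fintype n]
    (M : Matrix m m ℝ) (B : Matrix m n ℝ) (c : ℝ) {x : m → ℝ} (hx : x ≠ 0)
    (hxB : x ᵥ* B = 0) (hM : 0 ≤ x ⬝ᵥ M *ᵥ x) :
    ¬ (-(M - c • (B * Bᵀ))).PosDef := by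
  intro hpos
  have hBBt : (B * Bᵀ) *ᵥ x = 0 := by
    rw [← mulVec_mulVec, mulVec_transpose, hxB, mulVec_zero]
  have hform := hpos.dotProduct_mulVec_pos hx
  rw [neg_mulVec, sub_mulVec, smul_mulVec, hBBt, smul_zero, sub_zero, dotProduct_neg,
    star_trivial] at hform
  linarith

theorem stmt13_general (w₁ w₂ w₃ γ : ℝ) (hw₂ : 0 < w₂) :
    ¬ (-(( !![(0:ℝ),0,0;0,0.1,0;0,0,0] * Matrix.diagonal ![w₁, w₂, w₃]
          + Matrix.diagonal ![w₁, w₂, w₃] * (!![(0:ℝ),0,0;0,0.1,0;0,0,0])ᵀ)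
          - (2 * γ) • (!![(1:ℝ),0;0,1;1,1] * (!![(1:ℝ),0;0,1;1,1])ᵀ))).PosDef := by
  have hx : (![1, 1, -1] : Fin 3 → ℝ) ≠ 0 := fun h => by simpa using congrFun h 0
  refine not_posDef_neg_sub_smul_mul_transpose _ _ _ hx ?_ ?_
  · ext j
    fin_cases j <;> simp [vecMul, dotProduct, Fin.sum_univ_succ]
  · have hquad : ![1, 1, -1] ⬝ᵥ (!![(0:ℝ),0,0;0,0.1,0;0,0,0] * diagonal ![w₁, w₂, w₃]
        + diagonal ![w₁, w₂, w₃] * (!![(0:ℝ),0,0;0,0.1,0;0,0,0])ᵀ) *ᵥ ![1, 1, -1] = w₂ / 5 := by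
      simp [mulVec, dotProduct, Fin.sum_univ_succ, diagonal_mul, vecMul_diagonal]
      ring
    rw [hquad]
    positivity

theorem stmt13 (w₁ w₂ w₃ γ : ℝ) (hw₁ : 0 < w₁) (hw₂ : 0 < w₂) (hw₃ : 0 < w₃) :
    ¬ (-(( !![(0:ℝ),0,0;0,0.1,0;0,0,0] * Matrix.diagonal ![w₁, w₂, w₃]
          + Matrix.diagonal ![w₁, w₂, w₃] * (!![(0:ℝ),0,0;0,0.1,0;0,0,0])ᵀ)
          - (2 * γ) • (!![(1:ℝ),0;0,1;1,1] * (!![(1:ℝ),0;0,1;1,1])ᵀ))).PosDef :=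
  stmt13_general w₁ w₂ w₃ γ hw₂
end
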